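/- Let p : ℝ → ℝ be twice continuously differentiable, 1-periodic, with p(x) > 0 for all x; let a : ℝ → ℝ be continuously differentiable and 1-periodic; let c̃ ∈ ℝ; let I be a finite index set and for each i ∈ I let b_i : ℝ → ℝ be twice continuously differentiable and 1-periodic. Assume the stationary Fokker–Planck equation holds pointwise on ℝ: (1/2)·(Σ_{i∈I} b_i²·p)″(x) = ((c̃ + a)·p)′(x) for all x ∈ ℝ. Then ∫₀¹ a′(x)·p(x) dx − (1/2)·Σ_{i∈I} ∫₀¹ b_i′(x)²·p(x) dx = −(1/2)·Σ_{i∈I} ∫₀¹ ((b_i·p)′(x))² / p(x) dx. -/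

import Mathlib

/-!
Writing `q = (∑ᵢ bᵢ²) p`, the Fokker–Planck equation integrates once to a constant flux
`q'/2 - (c̃ + a) p = J`. Expanding the square gives
`∑ᵢ ((bᵢ p)')² / p = ∑ᵢ (bᵢ')² p + q' p' / p`, so the identity reduces to
`∫ a' p = -(1/2) ∫ q' p' / p`. Integrating by parts, `∫ a' p = -∫ a p'`, and dividing the
flux relation by `p` gives
`a p' = q' p' / (2p) - c̃ p' - J p' / p`; the last two terms integrate to zero over a period,
being exact derivatives of the periodic functions `p` and `log p`.
-/

open intervalIntegral Function

namespace Function.Periodic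

variable {f g : ℝ → ℝ} {T : ℝ}

theorem integral_deriv_eq_zero (hf : ContDiff ℝ 1 f) (hper : Periodic f T) (t : ℝ) :
    ∫ x in t..t + T, deriv f x = 0 := by
  rw [integral_deriv_eq_sub (fun x _ => hf.differentiable one_ne_zero x)
    ((hf.continuous_deriv le_rfl).intervalIntegrable _ _), hper t, sub_self]

theorem integral_deriv_div_self_eq_zero (hf : ContDiff ℝ 1 f) (hper : Periodic f T)
    (hf0 : ∀ x, f x ≠ 0) (t : ℝ) : ∫ x in t..t + T, deriv f x / f x = 0 := by
  have hlog : Periodic (fun x => Real.log (f x)) T := fun x => by simp only [hper x]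
  rw [← hlog.integral_deriv_eq_zero (hf.log hf0) t]
  exact integral_congr fun x _ => (deriv.log (hf.differentiable one_ne_zero x) (hf0 x)).symm

theorem integral_deriv_mul_eq_neg_integral_mul_deriv (hf : ContDiff ℝ 1 f) (hg : ContDiff ℝ 1 g)
    (hf_per : Periodic f T) (hg_per : Periodic g T) (t : ℝ) :
    ∫ x in t..t + T, deriv f x * g x = -∫ x in t..t + T, f x * deriv g x := by
  have hparts := integral_mul_deriv_eq_deriv_mul (a := t) (b := t + T)
    (fun x _ => (hf.differentiable one_ne_zero x).hasDerivAt)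
    (fun x _ => (hg.differentiable one_ne_zero x).hasDerivAt)
    ((hf.continuous_deriv le_rfl).intervalIntegrable _ _)
    ((hg.continuous_deriv le_rfl).intervalIntegrable _ _)
  rw [hf_per t, hg_per t, sub_self, zero_sub] at hparts
  linarith

end Function.Periodic

theorem sum_sq_deriv_mul_div_eq {ι : Type*} (s : Finset ι) {b : ι → ℝ → ℝ} {p : ℝ → ℝ}
    {x : ℝ} (hb : ∀ i ∈ s, DifferentiableAt ℝ (b i) x) (hp : DifferentiableAt ℝ p x)
    (hpx : p x ≠ 0) :
    ∑ i ∈ s, deriv (fun y => b i y * p y) x ^ 2 / p x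
      = (∑ i ∈ s, deriv (b i) x ^ 2 * p x)
        + deriv (fun y => (∑ i ∈ s, b i y ^ 2) * p y) x * deriv p x / p x := by
  have hsq : ∀ i ∈ s, HasDerivAt (fun y => b i y ^ 2) (2 * b i x * deriv (b i) x) x :=
    fun i hi => by simpa using (hb i hi).hasDerivAt.fun_pow 2
  rw [((HasDerivAt.fun_sum hsq).fun_mul hp.hasDerivAt).deriv]
  have hterm : ∀ i ∈ s, deriv (fun y => b i y * p y) x ^ 2 / p x = deriv (b i) x ^ 2 * p x
      + (2 * b i x * deriv (b i) x * p x + b i x ^ 2 * deriv p x) * deriv p x / p x := by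
    intro i hi
    rw [deriv_fun_mul (hb i hi) hp]
    field_simp
    ring
  rw [Finset.sum_congr rfl hterm]
  simp only [Finset.sum_add_distrib, ← Finset.sum_mul, ← Finset.sum_div]

theorem sum_integral_sq_deriv_mul_div_eq {ι : Type*} (s : Finset ι) {b : ι → ℝ → ℝ}
    {p : ℝ → ℝ} (hb : ∀ i ∈ s, ContDiff ℝ 1 (b i)) (hp : ContDiff ℝ 1 p) (hp0 : ∀ x, p x ≠ 0)
    (t u : ℝ) :
    ∑ i ∈ s, ∫ x in t..u, deriv (fun y => b i y * p y) x ^ 2 / p x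
      = (∑ i ∈ s, ∫ x in t..u, deriv (b i) x ^ 2 * p x)
        + ∫ x in t..u, deriv (fun y => (∑ i ∈ s, b i y ^ 2) * p y) x * deriv p x / p x := by
  have hq : ContDiff ℝ 1 fun y => (∑ i ∈ s, b i y ^ 2) * p y :=
    (ContDiff.sum fun i hi => (hb i hi).pow 2).mul hp
  rw [← integral_finsetSum, ← integral_finsetSum, ← integral_add]
  · exact integral_congr fun x _ => sum_sq_deriv_mul_div_eq s
      (fun i hi => (hb i hi).differentiable one_ne_zero x) (hp.differentiable one_ne_zero x)
      (hp0 x)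
  · exact (continuous_finsetSum _ fun i hi =>
      ((hb i hi).continuous_deriv le_rfl).pow 2 |>.mul hp.continuous).intervalIntegrable _ _
  · exact ((hq.continuous_deriv le_rfl).mul (hp.continuous_deriv le_rfl)).div hp.continuous hp0
      |>.intervalIntegrable _ _
  · exact fun i hi => (((hb i hi).continuous_deriv le_rfl).pow 2).mul hp.continuous
      |>.intervalIntegrable _ _
  · exact fun i hi => ((((hb i hi).mul hp).continuous_deriv le_rfl).pow 2).div hp.continuous hp0
      |>.intervalIntegrable _ _

theorem integral_deriv_mul_eq_of_flux_eq_const {p a g : ℝ → ℝ} {c J T : ℝ}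
    (hp : ContDiff ℝ 1 p) (hp_per : Periodic p T) (hp0 : ∀ x, p x ≠ 0)
    (ha : ContDiff ℝ 1 a) (ha_per : Periodic a T)
    (hflux : ∀ x, (1 / 2) * g x - (c + a x) * p x = J) (t : ℝ) :
    ∫ x in t..t + T, deriv a x * p x = -(1 / 2) * ∫ x in t..t + T, g x * deriv p x / p x := by
  have hp' := hp.continuous_deriv le_rfl
  have ha_cont := ha.continuous
  have hp_cont := hp.continuous
  have hpointwise : ∀ x, g x * deriv p x / p x
      = 2 * (a x * deriv p x + c * deriv p x + J * (deriv p x / p x)) := fun x => by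
    rw [← hflux x]
    field_simp [hp0 x]
    ring
  rw [integral_congr fun x _ => hpointwise x, integral_const_mul, integral_add, integral_add,
    integral_const_mul, integral_const_mul, hp_per.integral_deriv_eq_zero hp,
    hp_per.integral_deriv_div_self_eq_zero hp hp0,
    ha_per.integral_deriv_mul_eq_neg_integral_mul_deriv ha hp hp_per]
  · ring
  all_goals exact Continuous.intervalIntegrable (by fun_prop (disch := exact hp0 _)) _ _

theorem lyapunov_exponent_identity_general
    {I : Type*} [Fintype I]
    (p a : ℝ → ℝ) (ctilde : ℝ) (b : I → ℝ → ℝ)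
    (hp : ContDiff ℝ 2 p) (hpper : ∀ x, p (x + 1) = p x) (hppos : ∀ x, 0 < p x)
    (ha : ContDiff ℝ 1 a) (haper : ∀ x, a (x + 1) = a x)
    (hb : ∀ i, ContDiff ℝ 2 (b i))
    (hFP : ∀ x : ℝ,
      (1/2) * deriv (deriv (fun y => (∑ i, (b i y) ^ 2) * p y)) x
        = deriv (fun y => (ctilde + a y) * p y) x) :
    (∫ x in (0:ℝ)..1, deriv a x * p x)
      - (1/2) * ∑ i, ∫ x in (0:ℝ)..1, (deriv (b i) x) ^ 2 * p x
      = -(1/2) * ∑ i, ∫ x in (0:ℝ)..1, (deriv (fun y => b i y * p y) x) ^ 2 / p x := by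
  set q : ℝ → ℝ := fun y => (∑ i, b i y ^ 2) * p y
  have hq : ContDiff ℝ 2 q := (ContDiff.sum fun i _ => (hb i).pow 2).mul hp
  have hp1 : ContDiff ℝ 1 p := hp.of_le one_le_two
  have hp0 : ∀ x, p x ≠ 0 := fun x => (hppos x).ne'
  obtain ⟨J, hflux⟩ : ∃ J, ∀ x, (1 / 2) * deriv q x - (ctilde + a x) * p x = J := by
    have hq' := hq.differentiable_deriv_two
    have ha' := ha.differentiable one_ne_zero
    have hp' := hp1.differentiable one_ne_zero
    have hdiff : Differentiable ℝ fun x => (1 / 2) * deriv q x - (ctilde + a x) * p x := by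
      fun_prop
    refine ⟨_, fun x => is_const_of_deriv_eq_zero hdiff (fun y => ?_) x 0⟩
    rw [deriv_fun_sub, deriv_const_mul, hFP, sub_self] <;> fun_prop
  have hcross := integral_deriv_mul_eq_of_flux_eq_const hp1 hpper hp0 ha haper hflux 0
  rw [zero_add] at hcross
  rw [sum_integral_sq_deriv_mul_div_eq _ (fun i _ => (hb i).of_le one_le_two) hp1 hp0, hcross]
  ring

/-- The second identity of the Lyapunov exponent formula (4.10) in deterministic form:
if the stationary Fokker–Planck equation `(1/2)(Σᵢ bᵢ² p)'' = ((c̃ + a) p)'` holds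
pointwise, then
`∫₀¹ a' p − (1/2) Σᵢ ∫₀¹ (bᵢ')² p = −(1/2) Σᵢ ∫₀¹ ((bᵢ p)')² / p`. -/
theorem lyapunov_exponent_identity
    {I : Type*} [Fintype I]
    (p a : ℝ → ℝ) (ctilde : ℝ) (b : I → ℝ → ℝ)
    (hp : ContDiff ℝ 2 p) (hpper : ∀ x, p (x + 1) = p x) (hppos : ∀ x, 0 < p x)
    (ha : ContDiff ℝ 1 a) (haper : ∀ x, a (x + 1) = a x)
    (hb : ∀ i, ContDiff ℝ 2 (b i)) (hbper : ∀ i, ∀ x, b i (x + 1) = b i x)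
    (hFP : ∀ x : ℝ,
      (1/2) * deriv (deriv (fun y => (∑ i, (b i y) ^ 2) * p y)) x
        = deriv (fun y => (ctilde + a y) * p y) x) :
    (∫ x in (0:ℝ)..1, deriv a x * p x)
      - (1/2) * ∑ i, ∫ x in (0:ℝ)..1, (deriv (b i) x) ^ 2 * p x
      = -(1/2) * ∑ i, ∫ x in (0:ℝ)..1, (deriv (fun y => b i y * p y) x) ^ 2 / p x :=
  lyapunov_exponent_identity_general p a ctilde b hp hpper hppos ha haper hb hFP
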